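/- arXiv:2107.00211 — 2 statements merged into one kernel-verified Lean document; each statement's English description precedes it below -/
import Mathlib

section
/- For a pair of random variables (X, Y) and an r-round interactive protocol U_1, ..., U_r (Markov chains as in interactive protocols), Σ_{i odd} I(U_i; X | U^{i-1}) + Σ_{i even} I(U_i; Y | U^{i-1}) = I(U^r; X, Y). -/
/-!
Each round raises the information that the transcript carries about `(X, Y)` by exactly the
round's term. By the chain rule, `I(U^i; X, Y) - I(U^{i-1}; X, Y)` equals
`I(U_i; X | U^{i-1}) + I(U_i; Y | X, U^{i-1})` for a message from Alice, and the second summand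
vanishes by the Markov condition; symmetrically for Bob. The sum therefore telescopes to
`I(U^r; X, Y) - I(U^0; X, Y)`, and the empty transcript carries no information.
-/

open Finset

variable {Ω : Type*} [Fintype Ω]

/-- Shannon entropy of the discrete random variable `T` under the pmf `p`. -/
noncomputable def ent {α : Type*} [DecidableEq α] (p : Ω → ℝ) (T : Ω → α) : ℝ :=
  -∑ ω, p ω * Real.log (∑ ω', if T ω' = T ω then p ω' else 0)

/-- Mutual information `I(X;Y)` under the pmf `p`. -/
noncomputable def mi {α β : Type*} [DecidableEq α] [DecidableEq β]
    (p : Ω → ℝ) (X : Ω → α) (Y : Ω → β) : ℝ :=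
  ent p X + ent p Y - ent p (fun ω => (X ω, Y ω))

/-- Conditional mutual information `I(X;Y|Z)` under the pmf `p`. -/
noncomputable def cmi {α β γ : Type*} [DecidableEq α] [DecidableEq β] [DecidableEq γ]
    (p : Ω → ℝ) (X : Ω → α) (Y : Ω → β) (Z : Ω → γ) : ℝ :=
  ent p (fun ω => (X ω, Z ω)) + ent p (fun ω => (Y ω, Z ω))
    - ent p (fun ω => (X ω, Y ω, Z ω)) - ent p Z

/-- The transcript `U^{i-1}` of the first `i` messages (indices `0, …, i-1`). -/
def hist {r : ℕ} {𝒰 : Type*} (U : Fin r → Ω → 𝒰) (i : ℕ) : Ω → (Fin r → Option 𝒰) :=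
  fun ω j => if (j : ℕ) < i then some (U j ω) else none

section Entropy

variable {α β γ δ : Type*} [DecidableEq α] [DecidableEq β] [DecidableEq γ] [DecidableEq δ]
  (p : Ω → ℝ)

lemma ent_congr {T : Ω → α} {S : Ω → β} (h : ∀ ω ω', T ω = T ω' ↔ S ω = S ω') :
    ent p T = ent p S := by
  unfold ent
  congr 1
  refine sum_congr rfl fun ω _ => ?_
  congr 2
  exact sum_congr rfl fun ω' _ => if_congr (h ω' ω) rfl rfl

lemma ent_const (hp1 : ∑ ω, p ω = 1) (c : α) : ent p (fun _ : Ω => c) = 0 := by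
  simp [ent, hp1]

lemma mi_congr_left {S : Ω → α} {T : Ω → β} (W : Ω → γ)
    (h : ∀ ω ω', S ω = S ω' ↔ T ω = T ω') : mi p S W = mi p T W := by
  unfold mi
  rw [ent_congr p h, ent_congr p (T := fun ω => (S ω, W ω)) (S := fun ω => (T ω, W ω))]
  intro ω ω'
  simp only [Prod.mk.injEq, h]

lemma mi_swap_right (S : Ω → α) (X : Ω → β) (Y : Ω → γ) :
    mi p S (fun ω => (Y ω, X ω)) = mi p S (fun ω => (X ω, Y ω)) := by
  unfold mi
  rw [ent_congr p (T := fun ω => (Y ω, X ω)) (S := fun ω => (X ω, Y ω)),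
    ent_congr p (T := fun ω => (S ω, Y ω, X ω)) (S := fun ω => (S ω, X ω, Y ω))] <;>
  · intro ω ω'
    simp only [Prod.mk.injEq]
    tauto

lemma mi_const_left (hp1 : ∑ ω, p ω = 1) (c : α) (W : Ω → β) :
    mi p (fun _ : Ω => c) W = 0 := by
  have hW : ent p (fun ω => (c, W ω)) = ent p W := ent_congr p fun ω ω' => by simp
  simp only [mi, hW, ent_const p hp1]
  ring

/-- Chain rule: `I(A; X | Z) + I(A; Y | X, Z) = I(A, Z; X, Y) - I(Z; X, Y)`. -/
lemma cmi_add_cmi_eq_mi_sub_mi (A : Ω → α) (X : Ω → β) (Y : Ω → γ) (Z : Ω → δ) :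
    cmi p A X Z + cmi p A Y (fun ω => (X ω, Z ω))
      = mi p (fun ω => (A ω, Z ω)) (fun ω => (X ω, Y ω)) - mi p Z (fun ω => (X ω, Y ω)) := by
  have hAXYZ : ent p (fun ω => ((A ω, Z ω), X ω, Y ω)) = ent p (fun ω => (A ω, Y ω, X ω, Z ω)) :=
    ent_congr p fun ω ω' => by simp only [Prod.mk.injEq]; tauto
  have hXYZ : ent p (fun ω => (Z ω, X ω, Y ω)) = ent p (fun ω => (Y ω, X ω, Z ω)) :=
    ent_congr p fun ω ω' => by simp only [Prod.mk.injEq]; tauto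
  simp only [cmi, mi, hAXYZ, hXYZ]
  ring

end Entropy

section Protocol

variable {𝒰 : Type*} [DecidableEq 𝒰] {r : ℕ} (p : Ω → ℝ) (U : Fin r → Ω → 𝒰)
  {γ : Type*} [DecidableEq γ] (W : Ω → γ)

lemma mi_hist_succ (i : Fin r) :
    mi p (hist U (i + 1)) W = mi p (fun ω => (U i ω, hist U i ω)) W := by
  refine mi_congr_left p W fun ω ω' => ?_
  simp only [hist, funext_iff, Prod.mk.injEq]
  constructor
  · intro h
    refine ⟨by simpa using h i, fun j => ?_⟩
    by_cases hj : (j : ℕ) < i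
    · simpa [hj, Nat.lt_succ_of_lt hj] using h j
    · simp [hj]
  · rintro ⟨hi, h⟩ j
    rcases lt_trichotomy (j : ℕ) i with hj | hj | hj
    · simpa [hj, Nat.lt_succ_of_lt hj] using h j
    · obtain rfl := Fin.ext hj
      simp [hi]
    · have hj' : ¬ (j : ℕ) < i + 1 := by omega
      simp [hj']

lemma mi_hist_zero (hp1 : ∑ ω, p ω = 1) : mi p (hist U 0) W = 0 := by
  have hist_zero : hist U 0 = fun _ _ => none := by
    ext ω j
    simp [hist]
  rw [hist_zero]
  exact mi_const_left p hp1 _ W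

end Protocol

/-- Index `i` is round `i + 1`: Alice sends the messages with even `i`. -/
theorem stmt8_general {𝒳 𝒴 𝒰 : Type*} [DecidableEq 𝒳] [DecidableEq 𝒴] [DecidableEq 𝒰]
    (r : ℕ) (p : Ω → ℝ) (hp1 : ∑ ω, p ω = 1)
    (X : Ω → 𝒳) (Y : Ω → 𝒴) (U : Fin r → Ω → 𝒰)
    (hmarkovA : ∀ i : Fin r, Even (i : ℕ) →
      cmi p (U i) Y (fun ω => (X ω, hist U (i : ℕ) ω)) = 0)
    (hmarkovB : ∀ i : Fin r, ¬ Even (i : ℕ) →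
      cmi p (U i) X (fun ω => (Y ω, hist U (i : ℕ) ω)) = 0) :
    (∑ i : Fin r,
        if Even (i : ℕ) then cmi p (U i) X (hist U (i : ℕ))
        else cmi p (U i) Y (hist U (i : ℕ)))
      = mi p (hist U r) (fun ω => (X ω, Y ω)) := by
  set f : ℕ → ℝ := fun n => mi p (hist U n) (fun ω => (X ω, Y ω))
  have round_gain : ∀ i : Fin r, (if Even (i : ℕ) then cmi p (U i) X (hist U i)
      else cmi p (U i) Y (hist U i)) = f (i + 1) - f i := by
    intro i
    have chainXY := cmi_add_cmi_eq_mi_sub_mi p (U i) X Y (hist U i)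
    have chainYX := cmi_add_cmi_eq_mi_sub_mi p (U i) Y X (hist U i)
    simp only [mi_swap_right p _ X Y] at chainYX
    simp only [f, mi_hist_succ]
    split_ifs with h
    · linarith [hmarkovA i h]
    · linarith [hmarkovB i h]
  rw [sum_congr rfl fun i _ => round_gain i, Fin.sum_univ_eq_sum_range (fun n => f (n + 1) - f n),
    sum_range_sub]
  simp only [f, mi_hist_zero p U _ hp1, sub_zero]

/-- For an `r`-round interactive protocol `U_1, …, U_r`
(indexed `0, …, r-1`; index `i` corresponds to round `i+1`, odd rounds are sent
by Alice) satisfying the interactive Markov chain conditions,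
`Σ_{i odd} I(U_i; X | U^{i-1}) + Σ_{i even} I(U_i; Y | U^{i-1}) = I(U^r; X, Y)`. -/
theorem stmt8 {𝒳 𝒴 𝒰 : Type*} [DecidableEq 𝒳] [DecidableEq 𝒴] [DecidableEq 𝒰]
    (r : ℕ) (p : Ω → ℝ) (hp : ∀ ω, 0 ≤ p ω) (hp1 : ∑ ω, p ω = 1)
    (X : Ω → 𝒳) (Y : Ω → 𝒴) (U : Fin r → Ω → 𝒰)
    (hmarkovA : ∀ i : Fin r, Even (i : ℕ) →
      cmi p (U i) Y (fun ω => (X ω, hist U (i : ℕ) ω)) = 0)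
    (hmarkovB : ∀ i : Fin r, ¬ Even (i : ℕ) →
      cmi p (U i) X (fun ω => (Y ω, hist U (i : ℕ) ω)) = 0) :
    (∑ i : Fin r,
        if Even (i : ℕ) then cmi p (U i) X (hist U (i : ℕ))
        else cmi p (U i) Y (hist U (i : ℕ)))
      = mi p (hist U r) (fun ω => (X ω, Y ω)) :=
  stmt8_general r p hp1 X Y U hmarkovA hmarkovB
end

section
/- For all t ∈ (0, m] with m > 1: (t-1)² · (m ln m - m + 1) ≤ (m-1)² · (t ln t - t + 1). -/
/-!
With `g(x) = x log x - x + 1` (Mathlib's `klFun`), the claim says that `x ↦ g(x) / (x - 1)²`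
does not increase from `t` to `m`. Across `x = 1` this follows from `g(x) - (x - 1)² / 2` being
antitone (its derivative is `log x - (x - 1) ≤ 0`), which puts `g` above `(x - 1)² / 2` on `(0, 1]`
and below it on `[1, ∞)`. On `(1, ∞)` the derivative of the ratio is
`-((x + 1) log x - 2 (x - 1)) / (x - 1)³`, and `(x + 1) log x - 2 (x - 1)` vanishes at `1` and has
derivative `log x - (1 - x⁻¹) ≥ 0`.
-/

open Real Set InformationTheory

lemma hasDerivAt_sub_one_sq (x : ℝ) : HasDerivAt (fun y : ℝ => (y - 1) ^ 2) (2 * (x - 1)) x := by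
  refine (((hasDerivAt_id x).sub_const 1).pow 2).congr_deriv ?_
  simp

lemma antitoneOn_klFun_sub_half_sq :
    AntitoneOn (fun x => klFun x - (x - 1) ^ 2 / 2) (Ioi 0) := by
  have hderiv : ∀ x ∈ Ioi (0 : ℝ),
      HasDerivAt (fun x => klFun x - (x - 1) ^ 2 / 2) (log x - (x - 1)) x := fun x hx => by
    refine ((hasDerivAt_klFun (ne_of_gt hx)).sub
      ((hasDerivAt_sub_one_sq x).div_const 2)).congr_deriv ?_
    ring
  refine antitoneOn_of_deriv_nonpos (convex_Ioi 0)
    (fun x hx => (hderiv x hx).continuousAt.continuousWithinAt) ?_ ?_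
  · rw [interior_Ioi]
    exact fun x hx => (hderiv x hx).differentiableAt.differentiableWithinAt
  · rw [interior_Ioi]
    intro x hx
    rw [(hderiv x hx).deriv]
    linarith [log_le_sub_one_of_pos (mem_Ioi.mp hx)]

lemma half_sq_le_klFun {x : ℝ} (hx : 0 < x) (hx1 : x ≤ 1) : (x - 1) ^ 2 / 2 ≤ klFun x := by
  have := antitoneOn_klFun_sub_half_sq hx (mem_Ioi.mpr one_pos) hx1
  simp only [klFun_one] at this
  linarith

lemma klFun_le_half_sq {x : ℝ} (hx : 1 ≤ x) : klFun x ≤ (x - 1) ^ 2 / 2 := by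
  have := antitoneOn_klFun_sub_half_sq (mem_Ioi.mpr one_pos) (mem_Ioi.mpr (by linarith)) hx
  simp only [klFun_one] at this
  linarith

lemma two_mul_sub_one_le_add_one_mul_log {x : ℝ} (hx : 1 ≤ x) :
    2 * (x - 1) ≤ (x + 1) * log x := by
  set ψ : ℝ → ℝ := fun x => (x + 1) * log x - 2 * (x - 1)
  have hderiv : ∀ x ∈ Ici (1 : ℝ), HasDerivAt ψ (log x - (1 - x⁻¹)) x := fun x hx => by
    have hx0 : x ≠ 0 := by linarith [mem_Ici.mp hx]
    refine ((((hasDerivAt_id x).add_const 1).mul (hasDerivAt_log hx0)).sub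
      (((hasDerivAt_id x).sub_const 1).const_mul 2)).congr_deriv ?_
    simp only [id, add_mul, one_mul, mul_inv_cancel₀ hx0]
    ring
  have hmono : MonotoneOn ψ (Ici 1) := by
    refine monotoneOn_of_deriv_nonneg (convex_Ici 1)
      (fun x hx => (hderiv x hx).continuousAt.continuousWithinAt) ?_ ?_
    · rw [interior_Ici]
      exact fun x hx => (hderiv x (Ioi_subset_Ici_self hx)).differentiableAt.differentiableWithinAt
    · rw [interior_Ici]
      intro x hx
      rw [(hderiv x (Ioi_subset_Ici_self hx)).deriv]
      linarith [one_sub_inv_le_log_of_pos (zero_lt_one.trans (mem_Ioi.mp hx))]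
  have := hmono self_mem_Ici hx hx
  simp only [ψ, log_one] at this
  linarith

lemma antitoneOn_klFun_div_sub_one_sq :
    AntitoneOn (fun x => klFun x / (x - 1) ^ 2) (Ioi 1) := by
  have hderiv : ∀ x ∈ Ioi (1 : ℝ), HasDerivAt (fun x => klFun x / (x - 1) ^ 2)
      ((log x * (x - 1) ^ 2 - klFun x * (2 * (x - 1))) / ((x - 1) ^ 2) ^ 2) x := fun x hx => by
    have hx1 : 0 < x - 1 := sub_pos.mpr hx
    exact (hasDerivAt_klFun (by linarith)).div (hasDerivAt_sub_one_sq x) (by positivity)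
  refine antitoneOn_of_deriv_nonpos (convex_Ioi 1)
    (fun x hx => (hderiv x hx).continuousAt.continuousWithinAt) ?_ ?_
  · rw [interior_Ioi]
    exact fun x hx => (hderiv x hx).differentiableAt.differentiableWithinAt
  · rw [interior_Ioi]
    intro x hx
    rw [(hderiv x hx).deriv]
    have hx1 : 0 < x - 1 := sub_pos.mpr hx
    have hnum : log x * (x - 1) ^ 2 - klFun x * (2 * (x - 1))
        = -((x - 1) * ((x + 1) * log x - 2 * (x - 1))) := by
      rw [klFun_apply]; ring
    rw [hnum]
    have := two_mul_sub_one_le_add_one_mul_log (le_of_lt hx)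
    apply div_nonpos_of_nonpos_of_nonneg _ (by positivity)
    nlinarith

/-- For all `t ∈ (0, m]` with `m > 1`,
`(t-1)² (m ln m - m + 1) ≤ (m-1)² (t ln t - t + 1)`. -/
theorem stmt12 (m t : ℝ) (hm : 1 < m) (ht : 0 < t) (htm : t ≤ m) :
    (t - 1) ^ 2 * (m * Real.log m - m + 1)
      ≤ (m - 1) ^ 2 * (t * Real.log t - t + 1) := by
  have hklFun (x : ℝ) : x * log x - x + 1 = klFun x := by rw [klFun_apply]; ring
  rw [hklFun, hklFun]
  rcases le_or_gt t 1 with ht1 | ht1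
  · calc (t - 1) ^ 2 * klFun m ≤ (t - 1) ^ 2 * ((m - 1) ^ 2 / 2) := by
          gcongr; exact klFun_le_half_sq hm.le
      _ = (m - 1) ^ 2 * ((t - 1) ^ 2 / 2) := by ring
      _ ≤ (m - 1) ^ 2 * klFun t := by gcongr; exact half_sq_le_klFun ht ht1
  · have hratio := antitoneOn_klFun_div_sub_one_sq ht1 (ht1.trans_le htm) htm
    have ht1' : 0 < (t - 1) ^ 2 := by have := sub_pos.mpr ht1; positivity
    have hm1 : 0 < (m - 1) ^ 2 := by have := sub_pos.mpr hm; positivity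
    rw [div_le_div_iff₀ hm1 ht1'] at hratio
    linarith
end
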